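/- Let (γ,f₁,f₂) be a pseudo-spherical spacelike framed immersion whose curvature has the form (α,ℓ̂,0,n̂), with ε̂ = ⟨f₁,f₁⟩, and assume α²(s)+ε̂n̂²(s) ≠ 0, n̂(s) ≠ 0, and g(s) < 0 for all s ∈ I. Define the PS-timelike height function F^T : I × AdS³ → ℝ by F^T(s,v) = ⟨μ(s),v⟩. Then for s₀ ∈ I and v₀ ∈ AdS³ one has F^T(s₀,v₀) = 0, (∂F^T/∂s)(s₀,v₀) = 0 and (∂²F^T/∂s²)(s₀,v₀) = 0 simultaneously if and only if v₀ = ±E_a(γ)(s₀); i.e., the secondary discriminant set of F^T coincides with the image of the AdS-evolute of γ. -/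

import Mathlib

noncomputable section

/-- The index-2 pseudo-scalar product on `ℝ⁴₂`. -/
def pdot (u w : Fin 4 → ℝ) : ℝ :=
  -(u 0 * w 0) - u 1 * w 1 + u 2 * w 2 + u 3 * w 3

/-- 3×3 determinant. -/
def det3 (a b c d e f g h i : ℝ) : ℝ :=
  a * (e * i - f * h) - b * (d * i - f * g) + c * (d * h - e * g)

/-- The triple product `u×v×w` in `ℝ⁴₂`. -/
def tripleProd (u v w : Fin 4 → ℝ) : Fin 4 → ℝ :=
  ![ -det3 (u 1) (u 2) (u 3) (v 1) (v 2) (v 3) (w 1) (w 2) (w 3),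
      det3 (u 0) (u 2) (u 3) (v 0) (v 2) (v 3) (w 0) (w 2) (w 3),
      det3 (u 0) (u 1) (u 3) (v 0) (v 1) (v 3) (w 0) (w 1) (w 3),
     -det3 (u 0) (u 1) (u 2) (v 0) (v 1) (v 2) (w 0) (w 1) (w 2)]

/-- `μ(s) = γ(s)×v₁(s)×v₂(s)`. -/
def muOf (γ v₁ v₂ : ℝ → Fin 4 → ℝ) (s : ℝ) : Fin 4 → ℝ :=
  tripleProd (γ s) (v₁ s) (v₂ s)

/-- Pseudo-spherical spacelike framed curve on the open interval `I`. -/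
structure SpacelikeFramed (I : Set ℝ) (γ v₁ v₂ : ℝ → Fin 4 → ℝ) (ε : ℝ) : Prop where
  smooth_γ : ContDiffOn ℝ (⊤ : ℕ∞) γ I
  smooth_v₁ : ContDiffOn ℝ (⊤ : ℕ∞) v₁ I
  smooth_v₂ : ContDiffOn ℝ (⊤ : ℕ∞) v₂ I
  eps : ε = 1 ∨ ε = -1
  ads : ∀ s ∈ I, pdot (γ s) (γ s) = -1
  normv₁ : ∀ s ∈ I, pdot (v₁ s) (v₁ s) = ε
  normv₂ : ∀ s ∈ I, pdot (v₂ s) (v₂ s) = -ε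
  orth₁ : ∀ s ∈ I, pdot (γ s) (v₁ s) = 0
  orth₂ : ∀ s ∈ I, pdot (γ s) (v₂ s) = 0
  orth₃ : ∀ s ∈ I, pdot (v₁ s) (v₂ s) = 0
  tangent₁ : ∀ s ∈ I, pdot (deriv γ s) (v₁ s) = 0
  tangent₂ : ∀ s ∈ I, pdot (deriv γ s) (v₂ s) = 0

def scurvA (γ v₁ v₂ : ℝ → Fin 4 → ℝ) (s : ℝ) : ℝ := pdot (deriv γ s) (muOf γ v₁ v₂ s)
def scurvL (ε : ℝ) (v₁ v₂ : ℝ → Fin 4 → ℝ) (s : ℝ) : ℝ := -ε * pdot (deriv v₁ s) (v₂ s)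
def scurvM (γ v₁ v₂ : ℝ → Fin 4 → ℝ) (s : ℝ) : ℝ := pdot (deriv v₁ s) (muOf γ v₁ v₂ s)
def scurvN (γ v₁ v₂ : ℝ → Fin 4 → ℝ) (s : ℝ) : ℝ := pdot (deriv v₂ s) (muOf γ v₁ v₂ s)

/-- Pseudo-spherical timelike framed curve on the open interval `I`. -/
structure TimelikeFramed (I : Set ℝ) (γ v₁ v₂ : ℝ → Fin 4 → ℝ) : Prop where
  smooth_γ : ContDiffOn ℝ (⊤ : ℕ∞) γ I
  smooth_v₁ : ContDiffOn ℝ (⊤ : ℕ∞) v₁ I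
  smooth_v₂ : ContDiffOn ℝ (⊤ : ℕ∞) v₂ I
  ads : ∀ s ∈ I, pdot (γ s) (γ s) = -1
  normv₁ : ∀ s ∈ I, pdot (v₁ s) (v₁ s) = 1
  normv₂ : ∀ s ∈ I, pdot (v₂ s) (v₂ s) = 1
  orth₁ : ∀ s ∈ I, pdot (γ s) (v₁ s) = 0
  orth₂ : ∀ s ∈ I, pdot (γ s) (v₂ s) = 0
  orth₃ : ∀ s ∈ I, pdot (v₁ s) (v₂ s) = 0
  tangent₁ : ∀ s ∈ I, pdot (deriv γ s) (v₁ s) = 0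
  tangent₂ : ∀ s ∈ I, pdot (deriv γ s) (v₂ s) = 0

def tcurvA (γ v₁ v₂ : ℝ → Fin 4 → ℝ) (s : ℝ) : ℝ := -pdot (deriv γ s) (muOf γ v₁ v₂ s)
def tcurvL (v₁ v₂ : ℝ → Fin 4 → ℝ) (s : ℝ) : ℝ := pdot (deriv v₁ s) (v₂ s)
def tcurvM (γ v₁ v₂ : ℝ → Fin 4 → ℝ) (s : ℝ) : ℝ := -pdot (deriv v₁ s) (muOf γ v₁ v₂ s)
def tcurvN (γ v₁ v₂ : ℝ → Fin 4 → ℝ) (s : ℝ) : ℝ := -pdot (deriv v₂ s) (muOf γ v₁ v₂ s)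

/-- `g(s)` for the spacelike total evolute. -/
def sG (α ℓh nh : ℝ → ℝ) (εh : ℝ) (s : ℝ) : ℝ :=
  εh * (α s * deriv nh s - nh s * deriv α s) ^ 2
    - (ℓh s) ^ 2 * (nh s) ^ 2 * ((nh s) ^ 2 + εh * (α s) ^ 2)

/-- Total evolute (with the `+` sign) of a spacelike framed immersion with curvature
`(α, ℓ̂, 0, n̂)`. -/
def sEvolute (γ f₁ f₂ : ℝ → Fin 4 → ℝ) (α ℓh nh : ℝ → ℝ) (εh : ℝ) (s : ℝ) : Fin 4 → ℝ :=
  (Real.sqrt |sG α ℓh nh εh s|)⁻¹ •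
    ((ℓh s * nh s) • (nh s • γ s - α s • f₂ s)
      - (α s * deriv nh s - nh s * deriv α s) • f₁ s)

/-- `f(s)` for the timelike total evolute. -/
def tF (α ℓh nh : ℝ → ℝ) (s : ℝ) : ℝ :=
  (α s * deriv nh s - nh s * deriv α s) ^ 2
    - (ℓh s) ^ 2 * (nh s) ^ 2 * ((nh s) ^ 2 - (α s) ^ 2)

/-- Total evolute (with the `+` sign) of a timelike framed immersion with curvature
`(α, ℓ̂, 0, n̂)`. -/
def tEvolute (γ f₁ f₂ : ℝ → Fin 4 → ℝ) (α ℓh nh : ℝ → ℝ) (s : ℝ) : Fin 4 → ℝ :=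
  (Real.sqrt |tF α ℓh nh s|)⁻¹ •
    ((ℓh s * nh s) • (nh s • γ s - α s • f₂ s)
      - (α s * deriv nh s - nh s * deriv α s) • f₁ s)

/- ### Auxiliary lemmas -/

lemma tp0' (u v w : Fin 4 → ℝ) : tripleProd u v w 0 = -det3 (u 1) (u 2) (u 3) (v 1) (v 2) (v 3) (w 1) (w 2) (w 3) := rfl
lemma tp1' (u v w : Fin 4 → ℝ) : tripleProd u v w 1 = det3 (u 0) (u 2) (u 3) (v 0) (v 2) (v 3) (w 0) (w 2) (w 3) := rfl
lemma tp2' (u v w : Fin 4 → ℝ) : tripleProd u v w 2 = det3 (u 0) (u 1) (u 3) (v 0) (v 1) (v 3) (w 0) (w 1) (w 3) := rfl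
lemma tp3' (u v w : Fin 4 → ℝ) : tripleProd u v w 3 = -det3 (u 0) (u 1) (u 2) (v 0) (v 1) (v 2) (w 0) (w 1) (w 2) := rfl

lemma pdot_comm (u v : Fin 4 → ℝ) : pdot u v = pdot v u := by simp [pdot]; ring
lemma pdot_smul_left (c : ℝ) (u v : Fin 4 → ℝ) : pdot (c • u) v = c * pdot u v := by
  simp [pdot, Pi.smul_apply, smul_eq_mul]; ring
lemma pdot_smul_right (c : ℝ) (u v : Fin 4 → ℝ) : pdot u (c • v) = c * pdot u v := by
  simp [pdot, Pi.smul_apply, smul_eq_mul]; ring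
lemma pdot_add_left (u v w : Fin 4 → ℝ) : pdot (u + v) w = pdot u w + pdot v w := by
  simp [pdot, Pi.add_apply]; ring
lemma pdot_add_right (u v w : Fin 4 → ℝ) : pdot u (v + w) = pdot u v + pdot u w := by
  simp [pdot, Pi.add_apply]; ring
lemma pdot_sub_left (u v w : Fin 4 → ℝ) : pdot (u - v) w = pdot u w - pdot v w := by
  simp [pdot, Pi.sub_apply]; ring
lemma pdot_sub_right (u v w : Fin 4 → ℝ) : pdot u (v - w) = pdot u v - pdot u w := by
  simp [pdot, Pi.sub_apply]; ring
lemma pdot_zero_right (u : Fin 4 → ℝ) : pdot u 0 = 0 := by simp [pdot]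

lemma pdot_tripleProd_fst (u v w : Fin 4 → ℝ) : pdot (tripleProd u v w) u = 0 := by
  simp [pdot, tp0', tp1', tp2', tp3', det3]; ring
lemma pdot_tripleProd_snd (u v w : Fin 4 → ℝ) : pdot (tripleProd u v w) v = 0 := by
  simp [pdot, tp0', tp1', tp2', tp3', det3]; ring
lemma pdot_tripleProd_thd (u v w : Fin 4 → ℝ) : pdot (tripleProd u v w) w = 0 := by
  simp [pdot, tp0', tp1', tp2', tp3', det3]; ring

lemma pdot_tripleProd_self (u v w : Fin 4 → ℝ) :
    pdot (tripleProd u v w) (tripleProd u v w) =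
      det3 (pdot u u) (pdot u v) (pdot u w) (pdot u v) (pdot v v) (pdot v w)
        (pdot u w) (pdot v w) (pdot w w) := by
  simp [pdot, tp0', tp1', tp2', tp3', det3]; ring

lemma eq_of_pdot_frame {ε : ℝ} (hε : ε * ε = 1) {u f g m : Fin 4 → ℝ}
    (huu : pdot u u = -1) (hff : pdot f f = ε) (hgg : pdot g g = -ε) (hmm : pdot m m = 1)
    (huf : pdot u f = 0) (hug : pdot u g = 0) (hum : pdot u m = 0)
    (hfg : pdot f g = 0) (hfm : pdot f m = 0) (hgm : pdot g m = 0)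
    {x y : Fin 4 → ℝ}
    (h1 : pdot x u = pdot y u) (h2 : pdot x f = pdot y f)
    (h3 : pdot x g = pdot y g) (h4 : pdot x m = pdot y m) : x = y := by
  set d : ℝ := (u 0) * (det3 (f 1) (f 2) (f 3) (g 1) (g 2) (g 3) (m 1) (m 2) (m 3)) + -(u 1) * (det3 (f 0) (f 2) (f 3) (g 0) (g 2) (g 3) (m 0) (m 2) (m 3)) + (u 2) * (det3 (f 0) (f 1) (f 3) (g 0) (g 1) (g 3) (m 0) (m 1) (m 3)) + -(u 3) * (det3 (f 0) (f 1) (f 2) (g 0) (g 1) (g 2) (m 0) (m 1) (m 2)) with hd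
  have hd2 : d ^ 2 = 1 := by
    have hG : d ^ 2 =
        (pdot u u)*(pdot f f)*(pdot g g)*(pdot m m) - (pdot u u)*(pdot f f)*(pdot g m)*(pdot g m) - (pdot u u)*(pdot f g)*(pdot f g)*(pdot m m) + (pdot u u)*(pdot f g)*(pdot g m)*(pdot f m) + (pdot u u)*(pdot f m)*(pdot f g)*(pdot g m) - (pdot u u)*(pdot f m)*(pdot g g)*(pdot f m) - (pdot u f)*(pdot u f)*(pdot g g)*(pdot m m) + (pdot u f)*(pdot u f)*(pdot g m)*(pdot g m) + (pdot u f)*(pdot f g)*(pdot u g)*(pdot m m) - (pdot u f)*(pdot f g)*(pdot g m)*(pdot u m) - (pdot u f)*(pdot f m)*(pdot u g)*(pdot g m) + (pdot u f)*(pdot f m)*(pdot g g)*(pdot u m) + (pdot u g)*(pdot u f)*(pdot f g)*(pdot m m) - (pdot u g)*(pdot u f)*(pdot g m)*(pdot f m) - (pdot u g)*(pdot f f)*(pdot u g)*(pdot m m) + (pdot u g)*(pdot f f)*(pdot g m)*(pdot u m) + (pdot u g)*(pdot f m)*(pdot u g)*(pdot f m) - (pdot u g)*(pdot f m)*(pdot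 f g)*(pdot u m) - (pdot u m)*(pdot u f)*(pdot f g)*(pdot g m) + (pdot u m)*(pdot u f)*(pdot g g)*(pdot f m) + (pdot u m)*(pdot f f)*(pdot u g)*(pdot g m) - (pdot u m)*(pdot f f)*(pdot g g)*(pdot u m) - (pdot u m)*(pdot f g)*(pdot u g)*(pdot f m) + (pdot u m)*(pdot f g)*(pdot f g)*(pdot u m) := by
      simp only [pdot, det3, hd]; ring
    rw [hG, huu, hff, hgg, hmm, huf, hug, hum, hfg, hfm, hgm]
    linear_combination hε
  have hdne : d ≠ 0 := by intro h; rw [h] at hd2; norm_num at hd2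
  have h0 : pdot (x - y) u = 0 := by rw [pdot_sub_left]; exact sub_eq_zero.mpr h1
  have h1' : pdot (x - y) f = 0 := by rw [pdot_sub_left]; exact sub_eq_zero.mpr h2
  have h2' : pdot (x - y) g = 0 := by rw [pdot_sub_left]; exact sub_eq_zero.mpr h3
  have h3' : pdot (x - y) m = 0 := by rw [pdot_sub_left]; exact sub_eq_zero.mpr h4
  set z : Fin 4 → ℝ := x - y with hz
  simp only [pdot] at h0 h1' h2' h3'
  have e0 : z 0 * d = 0 := by rw [hd]; linear_combination (norm := (simp only [det3]; ring1))  (-(det3 (f 1) (f 2) (f 3) (g 1) (g 2) (g 3) (m 1) (m 2) (m 3))) * h0 + ((det3 (u 1) (u 2) (u 3) (g 1) (g 2) (g 3) (m 1) (m 2) (m 3))) * h1' + (-(det3 (u 1) (u 2) (u 3) (f 1) (f 2) (f 3) (m 1) (m 2) (m 3))) * h2' + ((det3 (u 1) (u 2) (u 3) (f 1) (f 2) (f 3) (g 1) (g 2) (g 3))) * h3'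
  have e1 : z 1 * d = 0 := by rw [hd]; linear_combination (norm := (simp only [det3]; ring1))  ((det3 (f 0) (f 2) (f 3) (g 0) (g 2) (g 3) (m 0) (m 2) (m 3))) * h0 + (-(det3 (u 0) (u 2) (u 3) (g 0) (g 2) (g 3) (m 0) (m 2) (m 3))) * h1' + ((det3 (u 0) (u 2) (u 3) (f 0) (f 2) (f 3) (m 0) (m 2) (m 3))) * h2' + (-(det3 (u 0) (u 2) (u 3) (f 0) (f 2) (f 3) (g 0) (g 2) (g 3))) * h3'
  have e2 : z 2 * d = 0 := by rw [hd]; linear_combination (norm := (simp only [det3]; ring1))  ((det3 (f 0) (f 1) (f 3) (g 0) (g 1) (g 3) (m 0) (m 1) (m 3))) * h0 + (-(det3 (u 0) (u 1) (u 3) (g 0) (g 1) (g 3) (m 0) (m 1) (m 3))) * h1' + ((det3 (u 0) (u 1) (u 3) (f 0) (f 1) (f 3) (m 0) (m 1) (m 3))) * h2' + (-(det3 (u 0) (u 1) (u 3) (f 0) (f 1) (f 3) (g 0) (g 1) (g 3))) * h3'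
  have e3 : z 3 * d = 0 := by rw [hd]; linear_combination (norm := (simp only [det3]; ring1))  (-(det3 (f 0) (f 1) (f 2) (g 0) (g 1) (g 2) (m 0) (m 1) (m 2))) * h0 + ((det3 (u 0) (u 1) (u 2) (g 0) (g 1) (g 2) (m 0) (m 1) (m 2))) * h1' + (-(det3 (u 0) (u 1) (u 2) (f 0) (f 1) (f 2) (m 0) (m 1) (m 2))) * h2' + ((det3 (u 0) (u 1) (u 2) (f 0) (f 1) (f 2) (g 0) (g 1) (g 2))) * h3'
  have hzz : z = 0 := by
    funext i
    fin_cases i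
    · exact (mul_eq_zero.mp e0).resolve_right hdne
    · exact (mul_eq_zero.mp e1).resolve_right hdne
    · exact (mul_eq_zero.mp e2).resolve_right hdne
    · exact (mul_eq_zero.mp e3).resolve_right hdne
  exact sub_eq_zero.mp (hz ▸ hzz)

lemma hasDerivAt_det3 {a b c d e f g h i : ℝ → ℝ} {a' b' c' d' e' f' g' h' i' : ℝ} {s : ℝ}
    (ha : HasDerivAt a a' s) (hb : HasDerivAt b b' s) (hc : HasDerivAt c c' s)
    (hd : HasDerivAt d d' s) (he : HasDerivAt e e' s) (hf : HasDerivAt f f' s)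
    (hg : HasDerivAt g g' s) (hh : HasDerivAt h h' s) (hi : HasDerivAt i i' s) :
    HasDerivAt (fun t => det3 (a t) (b t) (c t) (d t) (e t) (f t) (g t) (h t) (i t))
      (det3 a' b' c' (d s) (e s) (f s) (g s) (h s) (i s)
        + det3 (a s) (b s) (c s) d' e' f' (g s) (h s) (i s)
        + det3 (a s) (b s) (c s) (d s) (e s) (f s) g' h' i') s := by
  have H := ((ha.mul ((he.mul hi).sub (hf.mul hh))).sub
      (hb.mul ((hd.mul hi).sub (hf.mul hg)))).add
      (hc.mul ((hd.mul hh).sub (he.mul hg)))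
  have hD : det3 a' b' c' (d s) (e s) (f s) (g s) (h s) (i s)
        + det3 (a s) (b s) (c s) d' e' f' (g s) (h s) (i s)
        + det3 (a s) (b s) (c s) (d s) (e s) (f s) g' h' i'
      = a' * (e s * i s - f s * h s) + a s * (e' * i s + e s * i' - (f' * h s + f s * h'))
          - (b' * (d s * i s - f s * g s) + b s * (d' * i s + d s * i' - (f' * g s + f s * g')))
          + (c' * (d s * h s - e s * g s) + c s * (d' * h s + d s * h' - (e' * g s + e s * g'))) := by
    simp only [det3]; ring
  rw [hD]
  exact H

set_option linter.unreachableTactic false in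
set_option linter.unusedTactic false in
set_option linter.unnecessarySeqFocus false in
lemma hasDerivAt_tripleProd {u v w : ℝ → Fin 4 → ℝ} {u' v' w' : Fin 4 → ℝ} {s : ℝ}
    (hu : HasDerivAt u u' s) (hv : HasDerivAt v v' s) (hw : HasDerivAt w w' s) :
    HasDerivAt (fun t => tripleProd (u t) (v t) (w t))
      (tripleProd u' (v s) (w s) + tripleProd (u s) v' (w s) + tripleProd (u s) (v s) w') s := by
  have hui : ∀ j, HasDerivAt (fun t => u t j) (u' j) s := hasDerivAt_pi.mp hu
  have hvi : ∀ j, HasDerivAt (fun t => v t j) (v' j) s := hasDerivAt_pi.mp hv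
  have hwi : ∀ j, HasDerivAt (fun t => w t j) (w' j) s := hasDerivAt_pi.mp hw
  rw [hasDerivAt_pi]
  intro j
  fin_cases j
  · have := (hasDerivAt_det3 (hui 1) (hui 2) (hui 3) (hvi 1) (hvi 2) (hvi 3) (hwi 1) (hwi 2) (hwi 3)).neg
    exact this.congr_deriv (by simp [tripleProd, det3]; ring)
  · have := hasDerivAt_det3 (hui 0) (hui 2) (hui 3) (hvi 0) (hvi 2) (hvi 3) (hwi 0) (hwi 2) (hwi 3)
    exact this
  · have := hasDerivAt_det3 (hui 0) (hui 1) (hui 3) (hvi 0) (hvi 1) (hvi 3) (hwi 0) (hwi 1) (hwi 3)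
    exact this
  · have := (hasDerivAt_det3 (hui 0) (hui 1) (hui 2) (hvi 0) (hvi 1) (hvi 2) (hwi 0) (hwi 1) (hwi 2)).neg
    exact this.congr_deriv (by simp [tripleProd, det3]; ring)

lemma hasDerivAt_pdot {u w : ℝ → Fin 4 → ℝ} {u' w' : Fin 4 → ℝ} {s : ℝ}
    (hu : HasDerivAt u u' s) (hw : HasDerivAt w w' s) :
    HasDerivAt (fun t => pdot (u t) (w t)) (pdot u' (w s) + pdot (u s) w') s := by
  have hui : ∀ j, HasDerivAt (fun t => u t j) (u' j) s := hasDerivAt_pi.mp hu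
  have hwi : ∀ j, HasDerivAt (fun t => w t j) (w' j) s := hasDerivAt_pi.mp hw
  have H := ((((hui 0).mul (hwi 0)).neg.sub ((hui 1).mul (hwi 1))).add ((hui 2).mul (hwi 2))).add
      ((hui 3).mul (hwi 3))
  have hD : pdot u' (w s) + pdot (u s) w'
      = -(u' 0 * w s 0 + u s 0 * w' 0) - (u' 1 * w s 1 + u s 1 * w' 1)
          + (u' 2 * w s 2 + u s 2 * w' 2) + (u' 3 * w s 3 + u s 3 * w' 3) := by
    simp only [pdot]; ring
  rw [hD]
  exact H

theorem spacelike_height_function_secondary_discriminant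
    (I : Set ℝ) (hI : IsOpen I) (hIc : I.OrdConnected)
    (γ f₁ f₂ : ℝ → Fin 4 → ℝ) (εh : ℝ)
    (hfr : SpacelikeFramed I γ f₁ f₂ εh)
    (α ℓh nh : ℝ → ℝ)
    (hA : ∀ s ∈ I, α s = scurvA γ f₁ f₂ s)
    (hL : ∀ s ∈ I, ℓh s = scurvL εh f₁ f₂ s)
    (hM0 : ∀ s ∈ I, scurvM γ f₁ f₂ s = 0)
    (hN : ∀ s ∈ I, nh s = scurvN γ f₁ f₂ s)
    (himm : ∀ s ∈ I, ¬(α s = 0 ∧ ℓh s = 0 ∧ nh s = 0))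
    (hnh : ∀ s ∈ I, nh s ≠ 0)
    (hnd : ∀ s ∈ I, (α s) ^ 2 + εh * (nh s) ^ 2 ≠ 0)
    (hg : ∀ s ∈ I, sG α ℓh nh εh s < 0) :
    ∀ s₀ ∈ I, ∀ v₀ : Fin 4 → ℝ, pdot v₀ v₀ = -1 →
      ((pdot (muOf γ f₁ f₂ s₀) v₀ = 0 ∧
        deriv (fun s => pdot (muOf γ f₁ f₂ s) v₀) s₀ = 0 ∧
        deriv (deriv (fun s => pdot (muOf γ f₁ f₂ s) v₀)) s₀ = 0) ↔
      (v₀ = sEvolute γ f₁ f₂ α ℓh nh εh s₀ ∨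
       v₀ = -sEvolute γ f₁ f₂ α ℓh nh εh s₀)) := by
  have hε2 : εh * εh = 1 := by rcases hfr.eps with h | h <;> rw [h] <;> norm_num
  have hdγ : ∀ s ∈ I, DifferentiableAt ℝ γ s := fun s hs =>
    (hfr.smooth_γ.contDiffAt (hI.mem_nhds hs)).differentiableAt (by simp)
  have hdf₁ : ∀ s ∈ I, DifferentiableAt ℝ f₁ s := fun s hs =>
    (hfr.smooth_v₁.contDiffAt (hI.mem_nhds hs)).differentiableAt (by simp)
  have hdf₂ : ∀ s ∈ I, DifferentiableAt ℝ f₂ s := fun s hs =>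
    (hfr.smooth_v₂.contDiffAt (hI.mem_nhds hs)).differentiableAt (by simp)
  have hμγ : ∀ t, pdot (muOf γ f₁ f₂ t) (γ t) = 0 := fun t => pdot_tripleProd_fst _ _ _
  have hμf₁ : ∀ t, pdot (muOf γ f₁ f₂ t) (f₁ t) = 0 := fun t => pdot_tripleProd_snd _ _ _
  have hμf₂ : ∀ t, pdot (muOf γ f₁ f₂ t) (f₂ t) = 0 := fun t => pdot_tripleProd_thd _ _ _
  have hμμ : ∀ t ∈ I, pdot (muOf γ f₁ f₂ t) (muOf γ f₁ f₂ t) = 1 := by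
    intro t ht
    rw [muOf, pdot_tripleProd_self, hfr.ads t ht, hfr.normv₁ t ht, hfr.normv₂ t ht,
      hfr.orth₁ t ht, hfr.orth₂ t ht, hfr.orth₃ t ht]
    simp only [det3]
    linear_combination hε2
  have dzero : ∀ {u w : ℝ → Fin 4 → ℝ} {u' w' : Fin 4 → ℝ} {s : ℝ} {c : ℝ},
      HasDerivAt u u' s → HasDerivAt w w' s → s ∈ I → (∀ t ∈ I, pdot (u t) (w t) = c) →
      pdot u' (w s) + pdot (u s) w' = 0 := by
    intro u w u' w' s c hu hw hs hc
    have h1 := hasDerivAt_pdot hu hw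
    have h2 : HasDerivAt (fun t => pdot (u t) (w t)) 0 s := by
      have hev : (fun t => pdot (u t) (w t)) =ᶠ[nhds s] fun _ => c := by
        filter_upwards [hI.mem_nhds hs] with t ht using hc t ht
      exact (hasDerivAt_const s c).congr_of_eventuallyEq hev
    exact h1.unique h2
  have frenet : ∀ s ∈ I,
      HasDerivAt γ (α s • muOf γ f₁ f₂ s) s ∧
      HasDerivAt f₁ (ℓh s • f₂ s) s ∧
      HasDerivAt f₂ (ℓh s • f₁ s + nh s • muOf γ f₁ f₂ s) s ∧
      HasDerivAt (muOf γ f₁ f₂) (α s • γ s + (εh * nh s) • f₂ s) s := by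
    intro s hs
    have hγd : HasDerivAt γ (deriv γ s) s := (hdγ s hs).hasDerivAt
    have hf₁d : HasDerivAt f₁ (deriv f₁ s) s := (hdf₁ s hs).hasDerivAt
    have hf₂d : HasDerivAt f₂ (deriv f₂ s) s := (hdf₂ s hs).hasDerivAt
    have FR : ∀ {x y : Fin 4 → ℝ}, pdot x (γ s) = pdot y (γ s) → pdot x (f₁ s) = pdot y (f₁ s) →
        pdot x (f₂ s) = pdot y (f₂ s) →
        pdot x (muOf γ f₁ f₂ s) = pdot y (muOf γ f₁ f₂ s) → x = y := by
      intro x y h1 h2 h3 h4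
      exact eq_of_pdot_frame hε2 (hfr.ads s hs) (hfr.normv₁ s hs) (hfr.normv₂ s hs) (hμμ s hs)
        (hfr.orth₁ s hs) (hfr.orth₂ s hs) (by rw [pdot_comm]; exact hμγ s) (hfr.orth₃ s hs)
        (by rw [pdot_comm]; exact hμf₁ s) (by rw [pdot_comm]; exact hμf₂ s) h1 h2 h3 h4
    have hG : deriv γ s = α s • muOf γ f₁ f₂ s := by
      apply FR
      · have h := dzero hγd hγd hs hfr.ads
        rw [pdot_comm (γ s) (deriv γ s)] at h
        rw [pdot_smul_left, hμγ s]
        linarith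
      · rw [pdot_smul_left, hμf₁ s, hfr.tangent₁ s hs]; ring
      · rw [pdot_smul_left, hμf₂ s, hfr.tangent₂ s hs]; ring
      · rw [pdot_smul_left, hμμ s hs]
        have h := hA s hs
        rw [scurvA] at h
        linarith
    have hF₁ : deriv f₁ s = ℓh s • f₂ s := by
      apply FR
      · have h := dzero hf₁d hγd hs (fun t ht => by rw [pdot_comm]; exact hfr.orth₁ t ht)
        rw [hG, pdot_smul_right, pdot_comm (f₁ s) (muOf γ f₁ f₂ s), hμf₁ s] at h
        rw [pdot_smul_left, pdot_comm (f₂ s) (γ s), hfr.orth₂ s hs]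
        linarith
      · have h := dzero hf₁d hf₁d hs hfr.normv₁
        rw [pdot_comm (f₁ s) (deriv f₁ s)] at h
        rw [pdot_smul_left, pdot_comm (f₂ s) (f₁ s), hfr.orth₃ s hs]
        linarith
      · have h := hL s hs
        rw [scurvL] at h
        rw [pdot_smul_left, hfr.normv₂ s hs]
        linear_combination εh * h - pdot (deriv f₁ s) (f₂ s) * hε2
      · have h := hM0 s hs
        rw [scurvM] at h
        rw [pdot_smul_left, pdot_comm (f₂ s) (muOf γ f₁ f₂ s), hμf₂ s]
        linarith
    have hF₂ : deriv f₂ s = ℓh s • f₁ s + nh s • muOf γ f₁ f₂ s := by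
      apply FR
      · have h := dzero hf₂d hγd hs (fun t ht => by rw [pdot_comm]; exact hfr.orth₂ t ht)
        rw [hG, pdot_smul_right, pdot_comm (f₂ s) (muOf γ f₁ f₂ s), hμf₂ s] at h
        rw [pdot_add_left, pdot_smul_left, pdot_smul_left, pdot_comm (f₁ s) (γ s),
          hfr.orth₁ s hs, hμγ s]
        linarith
      · have h := dzero hf₂d hf₁d hs (fun t ht => by rw [pdot_comm]; exact hfr.orth₃ t ht)
        rw [hF₁, pdot_smul_right, hfr.normv₂ s hs] at h
        rw [pdot_add_left, pdot_smul_left, pdot_smul_left, hfr.normv₁ s hs, hμf₁ s]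
        linear_combination h
      · have h := dzero hf₂d hf₂d hs hfr.normv₂
        rw [pdot_comm (f₂ s) (deriv f₂ s)] at h
        rw [pdot_add_left, pdot_smul_left, pdot_smul_left, hfr.orth₃ s hs, hμf₂ s]
        linarith
      · have h := hN s hs
        rw [scurvN] at h
        rw [pdot_add_left, pdot_smul_left, pdot_smul_left,
          pdot_comm (f₁ s) (muOf γ f₁ f₂ s), hμf₁ s, hμμ s hs]
        linarith
    have hμd : HasDerivAt (muOf γ f₁ f₂)
        (tripleProd (deriv γ s) (f₁ s) (f₂ s) + tripleProd (γ s) (deriv f₁ s) (f₂ s)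
          + tripleProd (γ s) (f₁ s) (deriv f₂ s)) s := hasDerivAt_tripleProd hγd hf₁d hf₂d
    set M := tripleProd (deriv γ s) (f₁ s) (f₂ s) + tripleProd (γ s) (deriv f₁ s) (f₂ s)
          + tripleProd (γ s) (f₁ s) (deriv f₂ s) with hM
    have hMf : M = α s • γ s + (εh * nh s) • f₂ s := by
      apply FR
      · have h := dzero hμd hγd hs (fun t _ => hμγ t)
        rw [hG, pdot_smul_right, hμμ s hs] at h
        conv_rhs => rw [pdot_add_left, pdot_smul_left, pdot_smul_left, hfr.ads s hs,
          pdot_comm (f₂ s) (γ s), hfr.orth₂ s hs]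
        linarith
      · have h := dzero hμd hf₁d hs (fun t _ => hμf₁ t)
        rw [hF₁, pdot_smul_right, hμf₂ s] at h
        conv_rhs => rw [pdot_add_left, pdot_smul_left, pdot_smul_left, hfr.orth₁ s hs,
          pdot_comm (f₂ s) (f₁ s), hfr.orth₃ s hs]
        linarith
      · have h := dzero hμd hf₂d hs (fun t _ => hμf₂ t)
        rw [hF₂, pdot_add_right, pdot_smul_right, pdot_smul_right, hμf₁ s, hμμ s hs] at h
        conv_rhs => rw [pdot_add_left, pdot_smul_left, pdot_smul_left, hfr.orth₂ s hs,
          hfr.normv₂ s hs]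
        linear_combination h + nh s * hε2
      · have h := dzero hμd hμd hs hμμ
        rw [pdot_comm (muOf γ f₁ f₂ s) M] at h
        conv_rhs => rw [pdot_add_left, pdot_smul_left, pdot_smul_left,
          pdot_comm (γ s) (muOf γ f₁ f₂ s), hμγ s, pdot_comm (f₂ s) (muOf γ f₁ f₂ s), hμf₂ s]
        linarith
    refine ⟨?_, ?_, ?_, ?_⟩
    · rw [← hG]; exact hγd
    · rw [← hF₁]; exact hf₁d
    · rw [← hF₂]; exact hf₂d
    · rw [← hMf]; exact hμd
  intro s₀ hs₀ v₀ hv₀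
  obtain ⟨hγD, hf₁D, hf₂D, hμD⟩ := frenet s₀ hs₀
  have hn₀ := hnh s₀ hs₀
  set lam := pdot (γ s₀) v₀ with hlam
  set xx := pdot (f₁ s₀) v₀ with hxx
  set yy := pdot (f₂ s₀) v₀ with hyy
  set zz := pdot (muOf γ f₁ f₂ s₀) v₀ with hzz
  have hFd : ∀ s ∈ I, HasDerivAt (fun t => pdot (muOf γ f₁ f₂ t) v₀)
      (α s * pdot (γ s) v₀ + εh * (nh s * pdot (f₂ s) v₀)) s := by
    intro s hs
    have h := hasDerivAt_pdot (frenet s hs).2.2.2 (hasDerivAt_const s v₀)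
    have e : α s * pdot (γ s) v₀ + εh * (nh s * pdot (f₂ s) v₀)
        = pdot (α s • γ s + (εh * nh s) • f₂ s) v₀ + pdot (muOf γ f₁ f₂ s) 0 := by
      rw [pdot_add_left, pdot_smul_left, pdot_smul_left, pdot_zero_right]; ring
    rw [e]
    exact h
  have hd1 : deriv (fun s => pdot (muOf γ f₁ f₂ s) v₀) s₀
      = α s₀ * lam + εh * (nh s₀ * yy) := (hFd s₀ hs₀).deriv
  set da := deriv α s₀ with hda
  set dn := deriv nh s₀ with hdn
  have hαd : HasDerivAt α da s₀ := by
    have hsm : ContDiffOn ℝ (⊤ : ℕ∞) (deriv γ) I := hfr.smooth_γ.deriv_of_isOpen hI (by simp)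
    have h1 : DifferentiableAt ℝ (deriv γ) s₀ :=
      (hsm.contDiffAt (hI.mem_nhds hs₀)).differentiableAt (by simp)
    have h2 := hasDerivAt_pdot h1.hasDerivAt hμD
    have hev : α =ᶠ[nhds s₀] fun t => pdot (deriv γ t) (muOf γ f₁ f₂ t) := by
      filter_upwards [hI.mem_nhds hs₀] with t ht using hA t ht
    have h3 : DifferentiableAt ℝ α s₀ := hev.differentiableAt_iff.mpr h2.differentiableAt
    exact h3.hasDerivAt
  have hνd : HasDerivAt nh dn s₀ := by
    have hsm : ContDiffOn ℝ (⊤ : ℕ∞) (deriv f₂) I := hfr.smooth_v₂.deriv_of_isOpen hI (by simp)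
    have h1 : DifferentiableAt ℝ (deriv f₂) s₀ :=
      (hsm.contDiffAt (hI.mem_nhds hs₀)).differentiableAt (by simp)
    have h2 := hasDerivAt_pdot h1.hasDerivAt hμD
    have hev : nh =ᶠ[nhds s₀] fun t => pdot (deriv f₂ t) (muOf γ f₁ f₂ t) := by
      filter_upwards [hI.mem_nhds hs₀] with t ht using hN t ht
    have h3 : DifferentiableAt ℝ nh s₀ := hev.differentiableAt_iff.mpr h2.differentiableAt
    exact h3.hasDerivAt
  have hΦeq : deriv (deriv (fun s => pdot (muOf γ f₁ f₂ s) v₀)) s₀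
      = da * lam + α s₀ * (α s₀ * zz)
        + εh * (dn * yy + nh s₀ * (ℓh s₀ * xx + nh s₀ * zz)) := by
    have hp : HasDerivAt (fun t => pdot (γ t) v₀)
        (pdot (α s₀ • muOf γ f₁ f₂ s₀) v₀ + pdot (γ s₀) 0) s₀ :=
      hasDerivAt_pdot hγD (hasDerivAt_const s₀ v₀)
    have hq : HasDerivAt (fun t => pdot (f₂ t) v₀)
        (pdot (ℓh s₀ • f₁ s₀ + nh s₀ • muOf γ f₁ f₂ s₀) v₀ + pdot (f₂ s₀) 0) s₀ :=
      hasDerivAt_pdot hf₂D (hasDerivAt_const s₀ v₀)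
    have hΦ : HasDerivAt (fun s => α s * pdot (γ s) v₀ + εh * (nh s * pdot (f₂ s) v₀))
        (da * pdot (γ s₀) v₀ + α s₀ * (pdot (α s₀ • muOf γ f₁ f₂ s₀) v₀ + pdot (γ s₀) 0)
          + εh * (dn * pdot (f₂ s₀) v₀
            + nh s₀ * (pdot (ℓh s₀ • f₁ s₀ + nh s₀ • muOf γ f₁ f₂ s₀) v₀ + pdot (f₂ s₀) 0))) s₀ :=
      (hαd.mul hp).add ((hνd.mul hq).const_mul εh)
    have hev2 : deriv (fun s => pdot (muOf γ f₁ f₂ s) v₀)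
        =ᶠ[nhds s₀] (fun s => α s * pdot (γ s) v₀ + εh * (nh s * pdot (f₂ s) v₀)) := by
      filter_upwards [hI.mem_nhds hs₀] with t ht using (hFd t ht).deriv
    rw [hev2.deriv_eq, hΦ.deriv, pdot_add_left, pdot_smul_left, pdot_smul_left, pdot_smul_left,
      pdot_zero_right, pdot_zero_right, ← hlam, ← hxx, ← hyy, ← hzz]
    ring
  set g₀ := sG α ℓh nh εh s₀ with hg₀def
  set B := α s₀ * dn - nh s₀ * da with hB
  have hg₀ : g₀ = εh * B ^ 2 - ℓh s₀ ^ 2 * nh s₀ ^ 2 * (nh s₀ ^ 2 + εh * α s₀ ^ 2) := by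
    rw [hg₀def]; simp only [sG]; rfl
  have hgneg : g₀ < 0 := hg s₀ hs₀
  set c0 := (Real.sqrt |g₀|)⁻¹ with hc0
  set W := (ℓh s₀ * nh s₀) • (nh s₀ • γ s₀ - α s₀ • f₂ s₀) - B • f₁ s₀ with hW
  have hEdef : sEvolute γ f₁ f₂ α ℓh nh εh s₀ = c0 • W := by
    simp only [sEvolute]; rfl
  have hWγ : pdot (γ s₀) W = -(ℓh s₀ * nh s₀ ^ 2) := by
    rw [hW, pdot_sub_right, pdot_smul_right, pdot_sub_right, pdot_smul_right, pdot_smul_right,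
      pdot_smul_right, hfr.ads s₀ hs₀, hfr.orth₂ s₀ hs₀, hfr.orth₁ s₀ hs₀]
    ring
  have hWf₁ : pdot (f₁ s₀) W = -(B * εh) := by
    rw [hW, pdot_sub_right, pdot_smul_right, pdot_sub_right, pdot_smul_right, pdot_smul_right,
      pdot_smul_right, pdot_comm (f₁ s₀) (γ s₀), hfr.orth₁ s₀ hs₀,
      hfr.orth₃ s₀ hs₀, hfr.normv₁ s₀ hs₀]
    ring
  have hWf₂ : pdot (f₂ s₀) W = εh * (ℓh s₀ * nh s₀ * α s₀) := by
    rw [hW, pdot_sub_right, pdot_smul_right, pdot_sub_right, pdot_smul_right, pdot_smul_right,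
      pdot_smul_right, pdot_comm (f₂ s₀) (γ s₀), hfr.orth₂ s₀ hs₀, hfr.normv₂ s₀ hs₀,
      pdot_comm (f₂ s₀) (f₁ s₀), hfr.orth₃ s₀ hs₀]
    ring
  have hWμ : pdot (muOf γ f₁ f₂ s₀) W = 0 := by
    rw [hW, pdot_sub_right, pdot_smul_right, pdot_sub_right, pdot_smul_right, pdot_smul_right,
      pdot_smul_right, hμγ s₀, hμf₁ s₀, hμf₂ s₀]
    ring
  have hWW : pdot W W = g₀ := by
    have h1 : pdot W W = (ℓh s₀ * nh s₀) * (nh s₀ * pdot (γ s₀) W - α s₀ * pdot (f₂ s₀) W)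
        - B * pdot (f₁ s₀) W := by
      conv_lhs => rw [hW]
      rw [pdot_sub_left, pdot_smul_left, pdot_sub_left, pdot_smul_left, pdot_smul_left,
        pdot_smul_left]
    rw [h1, hWγ, hWf₁, hWf₂, hg₀]
    ring
  constructor
  · rintro ⟨h1, h2, h3⟩
    rw [hd1] at h2
    rw [hΦeq, h1] at h3
    set a := -lam with ha
    set b := εh * xx with hb
    set cc := -(εh * yy) with hcc
    have hv : v₀ = a • γ s₀ + b • f₁ s₀ + cc • f₂ s₀ := by
      apply eq_of_pdot_frame hε2 (hfr.ads s₀ hs₀) (hfr.normv₁ s₀ hs₀) (hfr.normv₂ s₀ hs₀)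
        (hμμ s₀ hs₀) (hfr.orth₁ s₀ hs₀) (hfr.orth₂ s₀ hs₀)
        (by rw [pdot_comm]; exact hμγ s₀) (hfr.orth₃ s₀ hs₀)
        (by rw [pdot_comm]; exact hμf₁ s₀) (by rw [pdot_comm]; exact hμf₂ s₀)
      · rw [pdot_comm v₀ (γ s₀), ← hlam, pdot_add_left, pdot_add_left, pdot_smul_left,
          pdot_smul_left, pdot_smul_left, hfr.ads s₀ hs₀, pdot_comm (f₁ s₀) (γ s₀),
          hfr.orth₁ s₀ hs₀, pdot_comm (f₂ s₀) (γ s₀), hfr.orth₂ s₀ hs₀, ha]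
        ring
      · rw [pdot_comm v₀ (f₁ s₀), ← hxx, pdot_add_left, pdot_add_left, pdot_smul_left,
          pdot_smul_left, pdot_smul_left, hfr.normv₁ s₀ hs₀, hfr.orth₁ s₀ hs₀,
          pdot_comm (f₂ s₀) (f₁ s₀), hfr.orth₃ s₀ hs₀, hb]
        linear_combination (-xx) * hε2
      · rw [pdot_comm v₀ (f₂ s₀), ← hyy, pdot_add_left, pdot_add_left, pdot_smul_left,
          pdot_smul_left, pdot_smul_left, hfr.normv₂ s₀ hs₀, hfr.orth₂ s₀ hs₀,
          hfr.orth₃ s₀ hs₀, hcc]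
        linear_combination (-yy) * hε2
      · rw [pdot_comm v₀ (muOf γ f₁ f₂ s₀), ← hzz, h1, pdot_add_left, pdot_add_left,
          pdot_smul_left, pdot_smul_left, pdot_smul_left,
          pdot_comm (γ s₀) (muOf γ f₁ f₂ s₀), hμγ s₀,
          pdot_comm (f₁ s₀) (muOf γ f₁ f₂ s₀), hμf₁ s₀,
          pdot_comm (f₂ s₀) (muOf γ f₁ f₂ s₀), hμf₂ s₀]
        ring
    have e1 : α s₀ * a + nh s₀ * cc = 0 := by
      rw [ha, hcc]; linear_combination (-1 : ℝ) * h2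
    have e2 : nh s₀ * ℓh s₀ * b - da * a - dn * cc = 0 := by
      rw [ha, hb, hcc]; linear_combination h3
    obtain ⟨t, hta, htb, htc⟩ : ∃ t, a = t * (ℓh s₀ * nh s₀ * nh s₀) ∧ b = t * (-B)
        ∧ cc = t * (-(ℓh s₀ * nh s₀ * α s₀)) := by
      by_cases hl : ℓh s₀ = 0
      · have hBne : B ≠ 0 := by
          intro hB0
          have : g₀ = 0 := by rw [hg₀, hB0, hl]; ring
          rw [this] at hgneg; exact lt_irrefl 0 hgneg
        have haz : B * a = 0 := by
          linear_combination dn * e1 + nh s₀ * e2 - nh s₀ * nh s₀ * b * hl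
        have ha0 : a = 0 := (mul_eq_zero.mp haz).resolve_left hBne
        have hcz : nh s₀ * cc = 0 := by linear_combination e1 - α s₀ * ha0
        have hc0' : cc = 0 := (mul_eq_zero.mp hcz).resolve_left hn₀
        refine ⟨b / (-B), ?_, ?_, ?_⟩
        · rw [ha0, hl]; ring
        · field_simp
        · rw [hc0', hl]; ring
      · have hwa : ℓh s₀ * nh s₀ * nh s₀ ≠ 0 := mul_ne_zero (mul_ne_zero hl hn₀) hn₀
        have hC1 : b * (ℓh s₀ * nh s₀ * nh s₀) = a * (-B) := by
          linear_combination nh s₀ * e2 + dn * e1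
        have hC2 : cc * (ℓh s₀ * nh s₀ * nh s₀) = a * (-(ℓh s₀ * nh s₀ * α s₀)) := by
          linear_combination ℓh s₀ * nh s₀ * e1
        refine ⟨a / (ℓh s₀ * nh s₀ * nh s₀), ?_, ?_, ?_⟩
        · field_simp
        · rw [div_mul_eq_mul_div, eq_div_iff hwa]; linear_combination hC1
        · rw [div_mul_eq_mul_div, eq_div_iff hwa]; linear_combination hC2
    have hvW : v₀ = t • W := by
      rw [hv, hW, hta, htb, htc]
      funext i
      simp only [Pi.add_apply, Pi.sub_apply, Pi.smul_apply, smul_eq_mul]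
      ring
    have ht2 : t * t * g₀ = -1 := by
      have h := hv₀
      rw [hvW, pdot_smul_left, pdot_smul_right, hWW] at h
      linear_combination h
    have hgabs : Real.sqrt |g₀| ^ 2 = -g₀ := by
      rw [Real.sq_sqrt (abs_nonneg _), abs_of_neg hgneg]
    have hgne : g₀ ≠ 0 := ne_of_lt hgneg
    have hc02 : c0 * c0 * g₀ = -1 := by
      have h1 : Real.sqrt |g₀| * Real.sqrt |g₀| = -g₀ := by
        rw [Real.mul_self_sqrt (abs_nonneg _), abs_of_neg hgneg]
      rw [hc0, ← mul_inv, h1, inv_neg, neg_mul, inv_mul_cancel₀ hgne]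
    have ht' : t = c0 ∨ t = -c0 := by
      have h1 : t * t = c0 * c0 := mul_right_cancel₀ hgne (by rw [ht2, hc02])
      have h2 : (t - c0) * (t + c0) = 0 := by linear_combination h1
      rcases mul_eq_zero.mp h2 with h | h
      · left; linarith
      · right; linarith
    rcases ht' with h | h
    · left; rw [hEdef, hvW, h]
    · right; rw [hvW, h, hEdef, neg_smul]
  · have key : ∀ e : ℝ, e * e * g₀ = -1 → v₀ = e • W →
        (zz = 0 ∧ deriv (fun s => pdot (muOf γ f₁ f₂ s) v₀) s₀ = 0 ∧
          deriv (deriv (fun s => pdot (muOf γ f₁ f₂ s) v₀)) s₀ = 0) := by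
      intro e _ hve
      have hlv : lam = e * pdot (γ s₀) W := by rw [hlam, hve, pdot_smul_right]
      have hxv : xx = e * pdot (f₁ s₀) W := by rw [hxx, hve, pdot_smul_right]
      have hyv : yy = e * pdot (f₂ s₀) W := by rw [hyy, hve, pdot_smul_right]
      have hzv : zz = 0 := by rw [hzz, hve, pdot_smul_right, hWμ]; ring
      refine ⟨hzv, ?_, ?_⟩
      · rw [hd1, hlv, hyv, hWγ, hWf₂]
        linear_combination (e * ℓh s₀ * nh s₀ ^ 2 * α s₀) * hε2
      · rw [hΦeq, hzv, hlv, hyv, hxv, hWγ, hWf₁, hWf₂]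
        linear_combination (e * da * ℓh s₀ * nh s₀ ^ 2) * hε2
    have hc02 : c0 * c0 * g₀ = -1 := by
      have hgne : g₀ ≠ 0 := ne_of_lt hgneg
      have h1 : Real.sqrt |g₀| * Real.sqrt |g₀| = -g₀ := by
        rw [Real.mul_self_sqrt (abs_nonneg _), abs_of_neg hgneg]
      rw [hc0, ← mul_inv, h1, inv_neg, neg_mul, inv_mul_cancel₀ hgne]
    rintro (h | h)
    · exact key c0 hc02 (by rw [h, hEdef])
    · refine key (-c0) (by linear_combination hc02) (by rw [h, hEdef, neg_smul])
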